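/- arXiv:1305.2968 — 5 statements merged into one kernel-verified Lean document; each statement's English description precedes it below -/
import Mathlib

section
/- Let V be an (n+m)-dimensional real vector space, F a symmetric n-density on V and μ a symmetric (n+m)-density on V. Given linearly independent covectors v₁*,…,v_m* ∈ V*, choose w₁*,…,w_n* so that {v₁*,…,v_m*, w₁*,…,w_n*} is a basis of V* with dual basis v₁,…,v_m, w₁,…,w_n of V. Then the quantity F(w₁∧…∧w_n) / μ(v₁∧…∧v_m∧w₁∧…∧w_n) is independent of the choice of w₁*,…,w_n*, and hence defines a symmetric m-density F*_μ on V*. -/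
/-!
Let `C` be the matrix expressing the basis `B'` in the basis `B`. Since both bases have the same
first `m` dual covectors, the rows of `C` indexed by `inl` are those of the identity, so `C` is
block lower triangular and `det C` equals the determinant `c` of its `inr`-`inr` block. That
block also expresses `w'ⱼ` in terms of the `wⱼ`, so both `w'₁ ∧ ⋯ ∧ w'ₙ` and
`v'₁ ∧ ⋯ ∧ v'ₘ ∧ w'₁ ∧ ⋯ ∧ w'ₙ` are the corresponding `B`-wedges multiplied by `c ≠ 0`.
Homogeneity and symmetry make `F` and `μ` scale by `|c|`, which cancels in the quotient.
-/

open ExteriorAlgebra Module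

theorem AlternatingMap.eq_smulRight_basis_det {R M N ι : Type*} [CommRing R]
    [AddCommGroup M] [Module R M] [AddCommGroup N] [Module R N] [Fintype ι] [DecidableEq ι]
    (e : Basis ι R M) (f : M [⋀^ι]→ₗ[R] N) : f = e.det.smulRight (f e) := by
  refine Basis.ext_alternating e fun σ hσ => ?_
  let τ : Equiv.Perm ι := Equiv.ofBijective σ (Finite.injective_iff_bijective.1 hσ)
  change f (e ∘ τ) = e.det.smulRight (f e) (e ∘ τ)
  simp [AlternatingMap.map_perm, Basis.det_self]

theorem AlternatingMap.map_sum_smul_eq_det_smul {R M N ι : Type*} [CommRing R]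
    [AddCommGroup M] [Module R M] [AddCommGroup N] [Module R N] [Fintype ι] [DecidableEq ι]
    (f : M [⋀^ι]→ₗ[R] N) (A : Matrix ι ι R) (v : ι → M) :
    f (fun j => ∑ i, A i j • v i) = A.det • f v := by
  -- Pull `f` back along `x ↦ ∑ i, x i • v i` and evaluate it on the columns of `A`.
  set g := f.compLinearMap (Fintype.linearCombination R v)
  have hv : g (Pi.basisFun R ι) = f v := by
    simp only [g, AlternatingMap.compLinearMap_apply]
    congr 1; ext j; simp
  calc f (fun j => ∑ i, A i j • v i) = g (fun j i => A i j) := rfl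
    _ = A.det • f v := by
      rw [g.eq_smulRight_basis_det (Pi.basisFun R ι), AlternatingMap.smulRight_apply, hv,
        Pi.basisFun_det_apply, ← Matrix.det_transpose]
      rfl

theorem apply_smul_eq_abs_mul {𝕜 M : Type*} [Ring 𝕜] [LinearOrder 𝕜] [IsOrderedRing 𝕜]
    [AddCommGroup M] [Module 𝕜 M] {p : Submodule 𝕜 M} {G : M → 𝕜}
    (hhom : ∀ a : 𝕜, 0 ≤ a → ∀ ξ ∈ p, G (a • ξ) = a * G ξ) (hsymm : ∀ ξ ∈ p, G (-ξ) = G ξ)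
    (c : 𝕜) {ξ : M} (hξ : ξ ∈ p) : G (c • ξ) = |c| * G ξ := by
  rcases le_or_gt 0 c with hc | hc
  · rw [abs_of_nonneg hc, hhom c hc ξ hξ]
  · rw [abs_of_neg hc, ← hhom (-c) (neg_nonneg.2 hc.le) ξ hξ, neg_smul, hsymm _ (p.smul_mem c hξ)]

namespace Module.Basis

variable {R M ι κ : Type*} [CommRing R] [AddCommGroup M] [Module R M]
  [DecidableEq ι] [DecidableEq κ]
  {B B' : Basis (ι ⊕ κ) R M} (h : ∀ i : ι, B.coord (Sum.inl i) = B'.coord (Sum.inl i))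
include h

theorem toMatrix_inl_apply_of_coord_inl_eq (i : ι) (k : ι ⊕ κ) :
    B.toMatrix B' (Sum.inl i) k = (1 : Matrix (ι ⊕ κ) (ι ⊕ κ) R) (Sum.inl i) k := by
  rw [toMatrix_apply, ← coord_apply, h, coord_apply, repr_self, Finsupp.single_apply,
    Matrix.one_apply]
  exact if_congr eq_comm rfl rfl

theorem toMatrix_eq_fromBlocks_of_coord_inl_eq :
    B.toMatrix B' =
      Matrix.fromBlocks 1 0 (B.toMatrix B').toBlocks₂₁ (B.toMatrix B').toBlocks₂₂ := by
  conv_lhs => rw [← Matrix.fromBlocks_toBlocks (B.toMatrix B')]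
  congr 1 <;> ext i j <;> simp [Matrix.toBlocks₁₁, Matrix.toBlocks₁₂,
    toMatrix_inl_apply_of_coord_inl_eq h, Matrix.one_apply]

variable [Fintype ι] [Fintype κ]

theorem det_toMatrix_eq_det_toBlocks₂₂_of_coord_inl_eq :
    (B.toMatrix B').det = (B.toMatrix B').toBlocks₂₂.det := by
  rw [toMatrix_eq_fromBlocks_of_coord_inl_eq h, Matrix.det_fromBlocks_zero₁₂, Matrix.det_one,
    one_mul, Matrix.toBlocks_fromBlocks₂₂]

theorem apply_inr_eq_sum_toBlocks₂₂_of_coord_inl_eq (j : κ) :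
    B' (Sum.inr j) = ∑ j', (B.toMatrix B').toBlocks₂₂ j' j • B (Sum.inr j') := by
  rw [← B.sum_toMatrix_smul_self B' (Sum.inr j), Fintype.sum_sum_type]
  simp [toMatrix_inl_apply_of_coord_inl_eq h, Matrix.toBlocks₂₂]

end Module.Basis

theorem stmt_1_general {n m : ℕ} {V : Type*} [AddCommGroup V] [Module ℝ V]
    (F : ExteriorAlgebra ℝ V → ℝ) (μ : ExteriorAlgebra ℝ V → ℝ)
    (hFhom : ∀ a : ℝ, 0 ≤ a → ∀ ξ ∈ ⋀[ℝ]^n V, F (a • ξ) = a * F ξ)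
    (hFsymm : ∀ ξ ∈ ⋀[ℝ]^n V, F (-ξ) = F ξ)
    (hμhom : ∀ a : ℝ, 0 ≤ a → ∀ ξ ∈ ⋀[ℝ]^(m + n) V, μ (a • ξ) = a * μ ξ)
    (hμsymm : ∀ ξ ∈ ⋀[ℝ]^(m + n) V, μ (-ξ) = μ ξ)
    -- two completions of the same covectors `v₁*, …, v_m*` to a basis of `V*`
    (B B' : Basis (Fin m ⊕ Fin n) ℝ V)
    (hBB' : ∀ i : Fin m, B.coord (Sum.inl i) = B'.coord (Sum.inl i)) :
    F (ιMulti ℝ n fun j => B (Sum.inr j)) /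
        μ (ιMulti ℝ (m + n) fun k => B (finSumFinEquiv.symm k)) =
      F (ιMulti ℝ n fun j => B' (Sum.inr j)) /
        μ (ιMulti ℝ (m + n) fun k => B' (finSumFinEquiv.symm k)) := by
  set c := (B.toMatrix B').det
  have hc : c ≠ 0 := by simpa only [Basis.det_apply] using (B.isUnit_det B').ne_zero
  have hw : ιMulti ℝ n (fun j => B' (Sum.inr j)) = c • ιMulti ℝ n (fun j => B (Sum.inr j)) := by
    simp_rw [c, Basis.det_toMatrix_eq_det_toBlocks₂₂_of_coord_inl_eq hBB',
      Basis.apply_inr_eq_sum_toBlocks₂₂_of_coord_inl_eq hBB']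
    exact AlternatingMap.map_sum_smul_eq_det_smul _ _ _
  have hv : ιMulti ℝ (m + n) (fun k => B' (finSumFinEquiv.symm k)) =
      c • ιMulti ℝ (m + n) (fun k => B (finSumFinEquiv.symm k)) := by
    have hB' : ⇑B' = fun k => ∑ l, B.toMatrix B' l k • B l :=
      funext fun k => (B.sum_toMatrix_smul_self B' k).symm
    have := ((ιMulti ℝ (m + n)).domDomCongr finSumFinEquiv.symm).map_sum_smul_eq_det_smul
      (B.toMatrix B') B
    rwa [← hB'] at this
  rw [hw, hv, apply_smul_eq_abs_mul hFhom hFsymm c (ιMulti_range ℝ n (Set.mem_range_self _)),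
    apply_smul_eq_abs_mul hμhom hμsymm c (ιMulti_range ℝ (m + n) (Set.mem_range_self _)),
    mul_div_mul_left _ _ (abs_ne_zero.2 hc)]

/-- (Well-definedness of the codensity.) Let `V` be an `(n+m)`-dimensional
real vector space, `F` a symmetric `n`-density and `μ` a symmetric `(n+m)`-density on `V`.
If two bases `{v₁*,…,v_m*, w₁*,…,w_n*}` and `{v₁*,…,v_m*, w₁'*,…,w_n'*}` of `V*` (encoded by
their dual bases `B, B'` of `V`, indexed by `Fin m ⊕ Fin n`) have the same covectors
`vᵢ* = B.coord (inl i) = B'.coord (inl i)`, then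
`F(w₁∧…∧w_n) / μ(v₁∧…∧v_m∧w₁∧…∧w_n)` is the same for both bases; hence it defines a
symmetric `m`-density `F*_μ` on `V*`. -/
theorem stmt_1 {n m : ℕ} {V : Type*} [AddCommGroup V] [Module ℝ V]
    (hV : finrank ℝ V = m + n)
    (F : ExteriorAlgebra ℝ V → ℝ) (μ : ExteriorAlgebra ℝ V → ℝ)
    -- `F` is a symmetric `n`-density on `V`
    (hFnonneg : ∀ ξ ∈ ⋀[ℝ]^n V, 0 ≤ F ξ)
    (hFhom : ∀ a : ℝ, 0 ≤ a → ∀ ξ ∈ ⋀[ℝ]^n V, F (a • ξ) = a * F ξ)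
    (hFzero : ∀ v : Fin n → V, (F (ιMulti ℝ n v) = 0 ↔ ιMulti ℝ n v = 0))
    (hFsymm : ∀ ξ ∈ ⋀[ℝ]^n V, F (-ξ) = F ξ)
    -- `μ` is a symmetric `(n+m)`-density on `V`
    (hμnonneg : ∀ ξ ∈ ⋀[ℝ]^(m + n) V, 0 ≤ μ ξ)
    (hμhom : ∀ a : ℝ, 0 ≤ a → ∀ ξ ∈ ⋀[ℝ]^(m + n) V, μ (a • ξ) = a * μ ξ)
    (hμzero : ∀ v : Fin (m + n) → V, (μ (ιMulti ℝ (m + n) v) = 0 ↔ ιMulti ℝ (m + n) v = 0))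
    (hμsymm : ∀ ξ ∈ ⋀[ℝ]^(m + n) V, μ (-ξ) = μ ξ)
    -- two completions of the same covectors `v₁*, …, v_m*` to a basis of `V*`
    (B B' : Basis (Fin m ⊕ Fin n) ℝ V)
    (hBB' : ∀ i : Fin m, B.coord (Sum.inl i) = B'.coord (Sum.inl i)) :
    F (ιMulti ℝ n fun j => B (Sum.inr j)) /
        μ (ιMulti ℝ (m + n) fun k => B (finSumFinEquiv.symm k)) =
      F (ιMulti ℝ n fun j => B' (Sum.inr j)) /
        μ (ιMulti ℝ (m + n) fun k => B' (finSumFinEquiv.symm k)) :=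
  stmt_1_general F μ hFhom hFsymm hμhom hμsymm B B' hBB'
end

section
/- Let V be an (n+m)-dimensional vector space, Ω a nonzero element of Λ^{n+m} V*, F a symmetric n-density on V, and μ = |Ω| the associated top density. Define ι*_Ω : Λⁿ V → Λᵐ V* by ι*_Ω(θ)(η) = Ω(η ∧ θ) (extended via the canonical pairing). Then ι*_Ω is a linear isomorphism mapping simple n-vectors to simple m-covectors, and the codensity satisfies F*_{|Ω|} = F ∘ (ι*_Ω)⁻¹ on simple m-covectors. -/
/-!
Fix a basis `b` of `V`. The products `b_S` over `n`-subsets `S` form a basis of `Λⁿ V`, and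
`b_{Sᶜ} ∧ b_T` vanishes unless `T = S`, when it is `±` the top wedge of `b`, on which `Ω` does
not vanish. So pairing with `b_{Sᶜ}` reads off the `S`-coordinate, which makes `ι*_Ω` injective;
it is bijective since `dim Λⁿ V = C(m+n, n) = C(m+n, m) = dim (Λᵐ V)*`. In top degree
`Ω ∘ ιMulti = Ω(b) · det_b`, and for the basis `v, w` the matrix of `(u, w)` is block triangular,
whence `ι*_Ω(w) = Ω(v ∧ w) · v*`. Finally `F` is absolutely homogeneous on `Λⁿ V`, so
`F((ι*_Ω)⁻¹(c⁻¹ ι*_Ω(w))) = F(c⁻¹ w) = F(w) / |c|`.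
-/

open ExteriorAlgebra Module

variable {V : Type*} [AddCommGroup V] [Module ℝ V]

/-- The Hodge-type map `ι*_Ω : Λⁿ V → Λᵐ V*`, `ι*_Ω(θ)(η) = Ω(η ∧ θ)`, where `Λᵐ V*` is
identified with the dual of `Λᵐ V` via the canonical pairing. -/
noncomputable def iotaOmega (m n : ℕ) (Ω : ExteriorAlgebra ℝ V →ₗ[ℝ] ℝ)
    (θ : ⋀[ℝ]^n V) : ⋀[ℝ]^m V →ₗ[ℝ] ℝ :=
  (Ω.comp (LinearMap.mulRight ℝ (θ : ExteriorAlgebra ℝ V))).domRestrict (⋀[ℝ]^m V)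

section TopDegree

variable {R M : Type*} [CommRing R] [AddCommGroup M] [Module R M] (Ω : ExteriorAlgebra R M →ₗ[R] R)

theorem apply_ιMulti_eq_mul_det {N : ℕ} (e : Basis (Fin N) R M) (x : Fin N → M) :
    Ω (ιMulti R N x) = Ω (ιMulti R N e) * e.det x := by
  simpa [mul_comm] using
    congr($(AlternatingMap.eq_smul_basis_det e (Ω.compAlternatingMap (ιMulti R N))) x)

theorem apply_ιMulti_basis_ne_zero {N : ℕ} (hΩ : ∃ ξ ∈ ⋀[R]^N M, Ω ξ ≠ 0)
    (e : Basis (Fin N) R M) : Ω (ιMulti R N e) ≠ 0 := by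
  obtain ⟨ξ, hξ, hΩξ⟩ := hΩ
  contrapose! hΩξ
  have hker : ⋀[R]^N M ≤ LinearMap.ker Ω := by
    rw [← ιMulti_span_fixedDegree, Submodule.span_le]
    rintro _ ⟨x, rfl⟩
    simp [apply_ιMulti_eq_mul_det Ω e x, hΩξ]
  exact hker hξ

theorem apply_ιMulti_mul_ιMulti_inr_eq_mul_det {m n : ℕ} (B : Basis (Fin m ⊕ Fin n) R M)
    (u : Fin m → M) :
    Ω (ιMulti R m u * ιMulti R n fun j => B (Sum.inr j)) =
      Ω (ιMulti R (m + n) fun k => B (finSumFinEquiv.symm k)) *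
        Matrix.det (Matrix.of fun i j => B.coord (Sum.inl i) (u j)) := by
  have hblocks : B.toMatrix (Sum.elim u fun j => B (Sum.inr j)) =
      Matrix.fromBlocks (Matrix.of fun i j => B.coord (Sum.inl i) (u j)) 0
        (Matrix.of fun i j => B.coord (Sum.inr i) (u j)) 1 := by
    ext (i | i) (j | j) <;>
      simp [Basis.toMatrix_apply, Matrix.one_apply, Finsupp.single_apply, eq_comm]
  rw [ιMulti_mul_ιMulti, apply_ιMulti_eq_mul_det Ω (B.reindex finSumFinEquiv), Basis.coe_reindex,
    Basis.det_reindex]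
  congr 1
  rw [show Fin.append u (fun j => B (Sum.inr j)) ∘ finSumFinEquiv =
      Sum.elim u fun j => B (Sum.inr j) from Fin.append_comp_sumElim, Basis.det_apply, hblocks,
    Matrix.det_fromBlocks_zero₁₂, Matrix.det_one, mul_one]

end TopDegree

section Nondegenerate

open Set.powersetCard

variable {K E : Type*} [Field K] [AddCommGroup E] [Module K E] {Ω : ExteriorAlgebra K E →ₗ[K] K}

theorem apply_ιMulti_ne_zero_of_linearIndependent [Module.Finite K E] {N : ℕ}
    (hE : finrank K E = N) (hΩ : ∃ ξ ∈ ⋀[K]^N E, Ω ξ ≠ 0) {x : Fin N → E}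
    (hx : LinearIndependent K x) : Ω (ιMulti K N x) ≠ 0 := by
  have := apply_ιMulti_basis_ne_zero Ω hΩ
    (basisOfLinearIndependentOfCardEqFinrank' x hx (by simp [hE]))
  rwa [coe_basisOfLinearIndependentOfCardEqFinrank'] at this

theorem apply_ιMulti_family_compl_mul_ne_zero [Module.Finite K E] {p q : ℕ}
    (hE : finrank K E = p + q) (hΩ : ∃ ξ ∈ ⋀[K]^(p + q) E, Ω ξ ≠ 0)
    (b : Basis (Fin (p + q)) K E) (s : Set.powersetCard (Fin (p + q)) q) :
    Ω (ιMulti_family K p b (compl (by simp) s) * ιMulti_family K q b s) ≠ 0 := by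
  have hdisj : Disjoint (compl (by simp) s : Set.powersetCard (Fin (p + q)) p).val s.val := by
    simpa using disjoint_compl_left
  have hne := apply_ιMulti_ne_zero_of_linearIndependent hE hΩ
    (b.linearIndependent.comp _ (ofFinEmbEquiv.symm (disjUnion hdisj)).injective)
  rw [ιMulti_family_mul_of_disjoint _ _ _ _ hdisj]
  rcases Int.units_eq_one_or (permOfDisjoint hdisj).sign with h | h <;> simpa [h] using hne

theorem apply_ιMulti_family_compl_mul_eq_zero {p q : ℕ} (b : Basis (Fin (p + q)) K E)
    {s t : Set.powersetCard (Fin (p + q)) q} (hst : t ≠ s) :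
    Ω (ιMulti_family K p b (compl (by simp) s) * ιMulti_family K q b t) = 0 := by
  obtain ⟨i, hit, his⟩ := (exists_mem_notMem_iff_ne t s).1 hst
  rw [ιMulti_family_mul_of_not_disjoint, map_zero]
  exact Finset.not_disjoint_iff.2 ⟨i, Finset.mem_compl.2 his, hit⟩

theorem eq_zero_of_forall_mul_eq_zero_of_finite [Module.Finite K E] {p q : ℕ}
    (hE : finrank K E = p + q) (hΩ : ∃ ξ ∈ ⋀[K]^(p + q) E, Ω ξ ≠ 0) (θ : ⋀[K]^q E)
    (h : ∀ η ∈ ⋀[K]^p E, Ω (η * θ) = 0) : θ = 0 := by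
  let b := finBasisOfFinrankEq K E hE
  refine (b.exteriorPower q).forall_coord_eq_zero_iff.1 fun s => ?_
  let η := ιMulti_family K p b (compl (by simp) s)
  have hpair : Ω ∘ₗ LinearMap.mulLeft K η ∘ₗ (⋀[K]^q E).subtype =
      Ω (η * ιMulti_family K q b s) • (b.exteriorPower q).coord s := by
    refine (b.exteriorPower q).ext fun t => ?_
    rcases eq_or_ne t s with rfl | hts
    · simp [exteriorPower.basis_apply]
    · simpa [exteriorPower.basis_apply, hts] using apply_ιMulti_family_compl_mul_eq_zero b hts
  have hθ := congr($hpair θ)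
  simp only [LinearMap.coe_comp, Function.comp_apply, LinearMap.mulLeft_apply,
    Submodule.subtype_apply, LinearMap.smul_apply, smul_eq_mul] at hθ
  rw [h η (ιMulti_range K p (Set.mem_range_self _))] at hθ
  exact (mul_eq_zero.1 hθ.symm).resolve_left (apply_ιMulti_family_compl_mul_ne_zero hE hΩ b s)

theorem eq_zero_of_apply_eq_zero_of_mem_exteriorPower_zero (hΩ : ∃ ξ ∈ ⋀[K]^0 E, Ω ξ ≠ 0)
    {θ : ExteriorAlgebra K E} (hθ : θ ∈ ⋀[K]^0 E) (h : Ω θ = 0) : θ = 0 := by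
  obtain ⟨ξ, hξ, hΩξ⟩ := hΩ
  simp only [exteriorPower, pow_zero, Submodule.one_eq_span, Submodule.mem_span_singleton] at hξ hθ
  obtain ⟨a, rfl⟩ := hθ
  obtain ⟨c, rfl⟩ := hξ
  simp only [map_smul, smul_eq_mul] at h hΩξ
  simp [(mul_eq_zero.1 h).resolve_right (right_ne_zero_of_mul hΩξ)]

theorem eq_zero_of_forall_mul_eq_zero {p q : ℕ} (hE : finrank K E = p + q)
    (hΩ : ∃ ξ ∈ ⋀[K]^(p + q) E, Ω ξ ≠ 0) (θ : ⋀[K]^q E)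
    (h : ∀ η ∈ ⋀[K]^p E, Ω (η * θ) = 0) : θ = 0 := by
  -- `finrank K E = 0` does not make `E` finite-dimensional, so degree zero is done by hand.
  rcases Nat.eq_zero_or_pos (p + q) with hpq | hpq
  · obtain ⟨rfl, rfl⟩ : p = 0 ∧ q = 0 := by omega
    refine Subtype.ext (eq_zero_of_apply_eq_zero_of_mem_exteriorPower_zero hΩ θ.2 ?_)
    simpa using h 1 (by simp [exteriorPower])
  · have : Module.Finite K E := Module.finite_of_finrank_pos (hE ▸ hpq)
    exact eq_zero_of_forall_mul_eq_zero_of_finite hE hΩ θ h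

end Nondegenerate

theorem apply_smul_eq_abs_mul_s2 {E : Type*} [AddCommGroup E] [Module ℝ E] {S : Submodule ℝ E}
    {F : E → ℝ} (hFhom : ∀ a : ℝ, 0 ≤ a → ∀ ξ ∈ S, F (a • ξ) = a * F ξ)
    (hFsymm : ∀ ξ ∈ S, F (-ξ) = F ξ) (a : ℝ) {ξ : E} (hξ : ξ ∈ S) :
    F (a • ξ) = |a| * F ξ := by
  rcases le_total 0 a with ha | ha
  · rw [hFhom a ha ξ hξ, abs_of_nonneg ha]
  · rw [← hFsymm _ (S.smul_mem a hξ), ← neg_smul, hFhom (-a) (neg_nonneg.2 ha) ξ hξ,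
      abs_of_nonpos ha]

section IotaOmega

variable {m n : ℕ} {Ω : ExteriorAlgebra ℝ V →ₗ[ℝ] ℝ}

variable (m n Ω) in
noncomputable def iotaOmegaLinearMap : ⋀[ℝ]^n V →ₗ[ℝ] Module.Dual ℝ (⋀[ℝ]^m V) :=
  ((LinearMap.mul ℝ (ExteriorAlgebra ℝ V)).flip.compr₂ Ω).compl₁₂ (⋀[ℝ]^n V).subtype
    (⋀[ℝ]^m V).subtype

theorem coe_iotaOmegaLinearMap : ⇑(iotaOmegaLinearMap m n Ω) = iotaOmega m n Ω := rfl

theorem iotaOmega_injective (hV : finrank ℝ V = m + n) (hΩ : ∃ ξ ∈ ⋀[ℝ]^(m + n) V, Ω ξ ≠ 0) :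
    Function.Injective (iotaOmega m n Ω) := by
  rw [← coe_iotaOmegaLinearMap, ← LinearMap.ker_eq_bot, LinearMap.ker_eq_bot']
  exact fun θ hθ => eq_zero_of_forall_mul_eq_zero hV hΩ θ fun η hη => congr($hθ ⟨η, hη⟩)

theorem iotaOmega_bijective (hV : finrank ℝ V = m + n) (hΩ : ∃ ξ ∈ ⋀[ℝ]^(m + n) V, Ω ξ ≠ 0) :
    Function.Bijective (iotaOmega m n Ω) := by
  have hinj := iotaOmega_injective hV hΩ
  rw [← coe_iotaOmegaLinearMap] at hinj ⊢
  obtain ⟨_, _, hrank⟩ : Module.Finite ℝ (⋀[ℝ]^n V) ∧ Module.Finite ℝ (⋀[ℝ]^m V) ∧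
      finrank ℝ (⋀[ℝ]^n V) = finrank ℝ (⋀[ℝ]^m V) := by
    rcases Nat.eq_zero_or_pos (m + n) with hmn | hmn
    · obtain ⟨rfl, rfl⟩ : m = 0 ∧ n = 0 := by omega
      have := Module.Finite.equiv (exteriorPower.zeroEquiv ℝ V).symm
      exact ⟨this, this, rfl⟩
    · have : Module.Finite ℝ V := Module.finite_of_finrank_pos (hV ▸ hmn)
      refine ⟨inferInstance, inferInstance, ?_⟩
      rw [exteriorPower.finrank_eq, exteriorPower.finrank_eq, hV, Nat.choose_symm_add]
  refine ⟨hinj, (LinearMap.injective_iff_surjective_of_finrank_eq_finrank ?_).1 hinj⟩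
  rw [Subspace.dual_finrank_eq, hrank]

end IotaOmega

/-- The second conjunct says `ι*_Ω(w₁∧…∧w_n) = Ω(v∧w) · v₁*∧…∧v_m*`, the simple covector being
the functional `u₁∧…∧u_m ↦ det(vᵢ*(u_j))`; the third is then `F*_{|Ω|} = F ∘ (ι*_Ω)⁻¹` on
simple covectors. -/
theorem stmt_2_general {n m : ℕ} (hV : finrank ℝ V = m + n)
    (Ω : ExteriorAlgebra ℝ V →ₗ[ℝ] ℝ)
    (hΩ : ∃ ξ ∈ ⋀[ℝ]^(m + n) V, Ω ξ ≠ 0)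
    (F : ExteriorAlgebra ℝ V → ℝ)
    (hFhom : ∀ a : ℝ, 0 ≤ a → ∀ ξ ∈ ⋀[ℝ]^n V, F (a • ξ) = a * F ξ)
    (hFsymm : ∀ ξ ∈ ⋀[ℝ]^n V, F (-ξ) = F ξ) :
    Function.Bijective (iotaOmega m n Ω) ∧
    (∀ B : Basis (Fin m ⊕ Fin n) ℝ V, ∀ u : Fin m → V,
      Ω (ιMulti ℝ m u * ιMulti ℝ n fun j => B (Sum.inr j)) =
        Ω (ιMulti ℝ (m + n) fun k => B (finSumFinEquiv.symm k)) *
          Matrix.det (Matrix.of fun i j => B.coord (Sum.inl i) (u j))) ∧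
    (∀ B : Basis (Fin m ⊕ Fin n) ℝ V,
      F ((Function.invFun (iotaOmega m n Ω)
            ((Ω (ιMulti ℝ (m + n) fun k => B (finSumFinEquiv.symm k)))⁻¹ •
              iotaOmega m n Ω
                ⟨ιMulti ℝ n fun j => B (Sum.inr j),
                  ExteriorAlgebra.ιMulti_range ℝ n (Set.mem_range_self _)⟩) :
          ⋀[ℝ]^n V) : ExteriorAlgebra ℝ V) =
        F (ιMulti ℝ n fun j => B (Sum.inr j)) /
          |Ω (ιMulti ℝ (m + n) fun k => B (finSumFinEquiv.symm k))|) := by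
  refine ⟨iotaOmega_bijective hV hΩ, apply_ιMulti_mul_ιMulti_inr_eq_mul_det Ω, fun B => ?_⟩
  rw [← coe_iotaOmegaLinearMap, ← map_smul, coe_iotaOmegaLinearMap,
    Function.leftInverse_invFun (iotaOmega_injective hV hΩ), Submodule.coe_smul,
    apply_smul_eq_abs_mul_s2 hFhom hFsymm _ (ιMulti_range ℝ n (Set.mem_range_self _)), abs_inv,
    inv_mul_eq_div]

/-- Let `V` be `(n+m)`-dimensional, `Ω` a nonzero top form, `F` a symmetric
`n`-density on `V`. Then `ι*_Ω` is a linear isomorphism mapping simple `n`-vectors to simple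
`m`-covectors, and the codensity satisfies `F*_{|Ω|} = F ∘ (ι*_Ω)⁻¹` on simple `m`-covectors:
for every basis `v₁,…,v_m,w₁,…,w_n` of `V`, `ι*_Ω(w₁∧…∧w_n)` is `Ω(v∧w)` times the simple
covector `v₁*∧…∧v_m*` (viewed, via the canonical pairing, as the functional
`u₁∧…∧u_m ↦ det(vᵢ*(u_j))`), and `F((ι*_Ω)⁻¹(v₁*∧…∧v_m*)) = F(w₁∧…∧w_n)/|Ω(v∧w)|`. -/
theorem stmt_2 {n m : ℕ} (hV : finrank ℝ V = m + n)
    (Ω : ExteriorAlgebra ℝ V →ₗ[ℝ] ℝ)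
    (hΩ : ∃ ξ ∈ ⋀[ℝ]^(m + n) V, Ω ξ ≠ 0)
    (F : ExteriorAlgebra ℝ V → ℝ)
    (hFnonneg : ∀ ξ ∈ ⋀[ℝ]^n V, 0 ≤ F ξ)
    (hFhom : ∀ a : ℝ, 0 ≤ a → ∀ ξ ∈ ⋀[ℝ]^n V, F (a • ξ) = a * F ξ)
    (hFzero : ∀ v : Fin n → V, (F (ιMulti ℝ n v) = 0 ↔ ιMulti ℝ n v = 0))
    (hFsymm : ∀ ξ ∈ ⋀[ℝ]^n V, F (-ξ) = F ξ) :
    Function.Bijective (iotaOmega m n Ω) ∧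
    (∀ B : Basis (Fin m ⊕ Fin n) ℝ V, ∀ u : Fin m → V,
      Ω (ιMulti ℝ m u * ιMulti ℝ n fun j => B (Sum.inr j)) =
        Ω (ιMulti ℝ (m + n) fun k => B (finSumFinEquiv.symm k)) *
          Matrix.det (Matrix.of fun i j => B.coord (Sum.inl i) (u j))) ∧
    (∀ B : Basis (Fin m ⊕ Fin n) ℝ V,
      F ((Function.invFun (iotaOmega m n Ω)
            ((Ω (ιMulti ℝ (m + n) fun k => B (finSumFinEquiv.symm k)))⁻¹ •
              iotaOmega m n Ω
                ⟨ιMulti ℝ n fun j => B (Sum.inr j),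
                  ExteriorAlgebra.ιMulti_range ℝ n (Set.mem_range_self _)⟩) :
          ⋀[ℝ]^n V) : ExteriorAlgebra ℝ V) =
        F (ιMulti ℝ n fun j => B (Sum.inr j)) /
          |Ω (ιMulti ℝ (m + n) fun k => B (finSumFinEquiv.symm k))|) :=
  stmt_2_general hV Ω hΩ F hFhom hFsymm
end

section
/- Let π : P → B be a fiber bundle of compact Finsler manifolds, dim B = n, with a fixed functorial definition of volume (e.g. Busemann–Hausdorff) assigning to each Finsler manifold a top-degree volume density, satisfying: if T : (V,‖·‖_V) → (W,‖·‖_W) is linear between n-dimensional normed spaces with operator norm ‖T‖ ≤ 1, then the induced map on top exterior powers has norm ≤ 1. If ‖dπ_p‖ ≤ 1 for all p ∈ P, then for every C¹ section s : B → P one has vol(s(B)) ≥ vol(B). -/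
open Module MeasureTheory ExteriorAlgebra


lemma aux_map_mem_exteriorPower {M N : Type*} [AddCommGroup M] [Module ℝ M]
    [AddCommGroup N] [Module ℝ N] (f : M →ₗ[ℝ] N) {n : ℕ} {x : ExteriorAlgebra ℝ M}
    (hx : x ∈ ⋀[ℝ]^n M) : ExteriorAlgebra.map f x ∈ ⋀[ℝ]^n N := by
  have hι : Submodule.map (ExteriorAlgebra.map f).toLinearMap
      (LinearMap.range (ι ℝ : M →ₗ[ℝ] ExteriorAlgebra ℝ M)) ≤
      LinearMap.range (ι ℝ : N →ₗ[ℝ] ExteriorAlgebra ℝ N) := by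
    rintro y ⟨z, ⟨w, rfl⟩, rfl⟩
    exact ⟨f w, (ExteriorAlgebra.map_apply_ι f w).symm⟩
  have hpow : ∀ k : ℕ, Submodule.map (ExteriorAlgebra.map f).toLinearMap
      (LinearMap.range (ι ℝ : M →ₗ[ℝ] ExteriorAlgebra ℝ M)) ^ k ≤
      LinearMap.range (ι ℝ : N →ₗ[ℝ] ExteriorAlgebra ℝ N) ^ k := by
    intro k
    induction k with
    | zero => simp
    | succ k ih => rw [pow_succ, pow_succ]; exact mul_le_mul' ih hι
  have h : Submodule.map (ExteriorAlgebra.map f).toLinearMap (⋀[ℝ]^n M) ≤ ⋀[ℝ]^n N := by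
    rw [exteriorPower, Submodule.map_pow]
    exact hpow n
  exact h ⟨x, hx, rfl⟩

/-- Let `π : P → B` be a fiber bundle of compact Finsler manifolds,
`dim B = n`, with a definition of volume `vol` assigning (functorially) to each normed space
a density on its top exterior power, satisfying axiom (*): a linear map of operator norm
`≤ 1` between `n`-dimensional normed spaces does not increase the assigned volume densities.
If `‖dπ_p‖ ≤ 1` for all `p`, then `vol(s(B)) ≥ vol(B)` for every section `s`.

We encode the differential-geometric data pointwise: `TB b` and `TP b` are the tangent
spaces of `B` at `b` and of `P` at `s(b)`, `dπ b` and `ds b` the differentials of `π` and of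
the section `s` (so that `dπ ∘ ds = id`), `μ` is the volume measure of `B` (finite since `B`
is compact), `ξ b` is a `vol`-unit top multivector of `TB b`, and
`J b = J(ds_b; vol_B, vol_P)` is the jacobian of `ds` computed in the `n`-dimensional image
of `ds_b` (this is the density of the volume of `s(B)` over that of `B`); then
`vol(s(B)) = ∫_B J dμ ≥ μ(B) = vol(B)`. -/
theorem stmt_8 {n m : ℕ} {B : Type*} [MeasurableSpace B]
    (μ : Measure B) [IsFiniteMeasure μ]
    (TB : B → Type) [∀ b, NormedAddCommGroup (TB b)] [∀ b, NormedSpace ℝ (TB b)]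
    (TP : B → Type) [∀ b, NormedAddCommGroup (TP b)] [∀ b, NormedSpace ℝ (TP b)]
    (hTB : ∀ b, finrank ℝ (TB b) = n) (hTP : ∀ b, finrank ℝ (TP b) = n + m)
    -- the definition of volume, assigning an `n`-density to every normed space
    (vol : ∀ (X : Type) [NormedAddCommGroup X] [NormedSpace ℝ X], ExteriorAlgebra ℝ X → ℝ)
    (hvolnonneg : ∀ (X : Type) [NormedAddCommGroup X] [NormedSpace ℝ X],
      ∀ ξ ∈ ⋀[ℝ]^n X, 0 ≤ vol X ξ)
    (hvolhom : ∀ (X : Type) [NormedAddCommGroup X] [NormedSpace ℝ X], ∀ a : ℝ, 0 ≤ a →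
      ∀ ξ ∈ ⋀[ℝ]^n X, vol X (a • ξ) = a * vol X ξ)
    (hvolpos : ∀ (X : Type) [NormedAddCommGroup X] [NormedSpace ℝ X],
      ∀ ξ ∈ ⋀[ℝ]^n X, (vol X ξ = 0 ↔ ξ = 0))
    (hvolsymm : ∀ (X : Type) [NormedAddCommGroup X] [NormedSpace ℝ X],
      ∀ ξ ∈ ⋀[ℝ]^n X, vol X (-ξ) = vol X ξ)
    -- axiom (*) of a definition of volume
    (hstar : ∀ (X Y : Type) [NormedAddCommGroup X] [NormedSpace ℝ X]
      [NormedAddCommGroup Y] [NormedSpace ℝ Y], finrank ℝ X = n → finrank ℝ Y = n →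
      ∀ T : X →L[ℝ] Y, ‖T‖ ≤ 1 → ∀ ξ ∈ ⋀[ℝ]^n X, vol Y (ExteriorAlgebra.map T.toLinearMap ξ) ≤ vol X ξ)
    -- the differentials of `π` and of the section `s`
    (dπ : ∀ b, TP b →L[ℝ] TB b) (ds : ∀ b, TB b →ₗ[ℝ] TP b)
    (hπ : ∀ b, ‖dπ b‖ ≤ 1)
    (hsec : ∀ b, (dπ b).toLinearMap ∘ₗ ds b = LinearMap.id)
    -- unit multivectors and the jacobian of `ds`
    (ξ : ∀ b, ExteriorAlgebra ℝ (TB b)) (hξ : ∀ b, ξ b ∈ ⋀[ℝ]^n (TB b))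
    (hξ1 : ∀ b, vol (TB b) (ξ b) = 1)
    (J : B → ℝ)
    (hJ : ∀ b, J b = vol ↥(LinearMap.range (ds b))
      (ExteriorAlgebra.map (ds b).rangeRestrict (ξ b)))
    (hJint : Integrable J μ) :
    ∫ b, J b ∂μ ≥ (μ Set.univ).toReal := by

  have hJ1 : ∀ b, 1 ≤ J b := by
    intro b
    set V := LinearMap.range (ds b) with hVdef
    have hid : ∀ x, dπ b (ds b x) = x := fun x =>
      LinearMap.congr_fun (hsec b) x
    have hinj : Function.Injective (ds b) := by
      intro x y hxy
      have := congrArg (dπ b) hxy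
      simpa [hid] using this
    have hV : finrank ℝ V = n := by
      rw [← hTB b]
      exact ((LinearEquiv.ofInjective (ds b) hinj).finrank_eq).symm
    set T : V →L[ℝ] TB b := (dπ b).comp (Submodule.subtypeL V) with hTdef
    have hT : ‖T‖ ≤ 1 := by
      refine ContinuousLinearMap.opNorm_le_bound _ zero_le_one ?_
      intro x
      calc ‖T x‖ ≤ ‖dπ b‖ * ‖(x : TP b)‖ := (dπ b).le_opNorm _
        _ ≤ 1 * ‖x‖ := by
            apply mul_le_mul (hπ b) le_rfl (norm_nonneg _) zero_le_one
        _ = 1 * ‖x‖ := rfl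
    set η := ExteriorAlgebra.map (ds b).rangeRestrict (ξ b) with hηdef
    have hη : η ∈ ⋀[ℝ]^n V := aux_map_mem_exteriorPower _ (hξ b)
    have hcomp : T.toLinearMap ∘ₗ (ds b).rangeRestrict = LinearMap.id := by
      rw [← hsec b]
      ext x
      rfl
    have key : ExteriorAlgebra.map T.toLinearMap η = ξ b := by
      rw [hηdef, ← AlgHom.comp_apply, ExteriorAlgebra.map_comp_map, hcomp,
        ExteriorAlgebra.map_id]
      rfl
    have := hstar V (TB b) hV (hTB b) T hT η hη
    rw [key, hξ1 b] at this
    rw [hJ b]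
    exact this
  have h1 : ∫ b, (1 : ℝ) ∂μ ≤ ∫ b, J b ∂μ :=
    integral_mono (integrable_const 1) hJint hJ1
  exact (by simpa using h1 : μ.real Set.univ ≤ ∫ b, J b ∂μ)
end

section
/- Let π : P → B be a Riemannian submersion with B compact of dimension n. Then for every C¹ section s : B → P, the Riemannian volume of s(B) is at least the Riemannian volume of B: vol(s(B)) ≥ vol(B). -/
/-!
The differential `ds` of a section is a right inverse of `dπ`, which is isometric on horizontal
vectors. The horizontal part of `ds w` is therefore a vector of norm `‖w‖`, so `ds` does not
shrink lengths: `(ds)* ∘ ds ≥ 1`, all its eigenvalues are `≥ 1`, the jacobian `√det` is `≥ 1`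
pointwise, and integrating over `B` gives `vol(s(B)) ≥ vol(B)`.
-/

open Module MeasureTheory

namespace LinearMap

variable {E F : Type*} [NormedAddCommGroup E] [InnerProductSpace ℝ E]
  [NormedAddCommGroup F] [InnerProductSpace ℝ F]

theorem norm_le_norm_of_comp_eq_id_of_isometric_orthogonal_ker [FiniteDimensional ℝ F]
    {p : F →ₗ[ℝ] E} {s : E →ₗ[ℝ] F}
    (hiso : ∀ v ∈ (ker p)ᗮ, ∀ w ∈ (ker p)ᗮ, inner ℝ (p v) (p w) = (inner ℝ v w : ℝ))
    (hsec : p ∘ₗ s = id) (w : E) : ‖w‖ ≤ ‖s w‖ := by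
  set K := ker p
  set v := Kᗮ.starProjection (s w)
  have hv : v ∈ Kᗮ := Kᗮ.starProjection_apply_mem (s w)
  have hvert : s w - v ∈ K := by
    simpa only [Submodule.orthogonal_orthogonal] using Kᗮ.sub_starProjection_mem_orthogonal (s w)
  have hpv : p v = w := by
    have hps : p (s w) = w := congr($hsec w)
    have := mem_ker.mp hvert
    rwa [map_sub, hps, sub_eq_zero, eq_comm] at this
  have hnorm : ‖w‖ = ‖v‖ := by
    have := hiso v hv v hv
    rw [hpv, real_inner_self_eq_norm_sq, real_inner_self_eq_norm_sq] at this
    exact (pow_left_inj₀ (norm_nonneg _) (norm_nonneg _) two_ne_zero).mp this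
  exact hnorm ▸ Kᗮ.norm_starProjection_apply_le (s w)

section FiniteDimensional

variable [FiniteDimensional ℝ E]

theorem IsSymmetric.one_le_eigenvalues {A : E →ₗ[ℝ] E} (hA : A.IsSymmetric)
    (h : ∀ v, ‖v‖ ^ 2 ≤ inner ℝ (A v) v) {n : ℕ} (hn : finrank ℝ E = n) (i : Fin n) :
    1 ≤ hA.eigenvalues hn i := by
  have hunit : ‖hA.eigenvectorBasis hn i‖ = 1 := (hA.eigenvectorBasis hn).orthonormal.1 i
  simpa [hA.apply_eigenvectorBasis, real_inner_smul_left, real_inner_self_eq_norm_sq, hunit]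
    using h (hA.eigenvectorBasis hn i)

theorem IsSymmetric.one_le_det {A : E →ₗ[ℝ] E} (hA : A.IsSymmetric)
    (h : ∀ v, ‖v‖ ^ 2 ≤ inner ℝ (A v) v) : 1 ≤ A.det := by
  rw [hA.det_eq_prod_eigenvalues rfl]
  exact Finset.one_le_prod fun i _ => hA.one_le_eigenvalues h rfl i

theorem one_le_det_adjoint_comp_self [FiniteDimensional ℝ F] {T : E →ₗ[ℝ] F}
    (h : ∀ v, ‖v‖ ≤ ‖T v‖) : 1 ≤ (adjoint T ∘ₗ T).det := by
  refine T.isSymmetric_adjoint_comp_self.one_le_det fun v => ?_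
  rw [comp_apply, adjoint_inner_left, real_inner_self_eq_norm_sq]
  exact pow_le_pow_left₀ (norm_nonneg v) (h v) 2

end FiniteDimensional

end LinearMap

theorem stmt_9_general {B : Type*} [MeasurableSpace B]
    (μ : Measure B) [IsFiniteMeasure μ]
    (TB : B → Type*) [∀ b, NormedAddCommGroup (TB b)] [∀ b, InnerProductSpace ℝ (TB b)]
    [∀ b, FiniteDimensional ℝ (TB b)]
    (TP : B → Type*) [∀ b, NormedAddCommGroup (TP b)] [∀ b, InnerProductSpace ℝ (TP b)]
    [∀ b, FiniteDimensional ℝ (TP b)]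
    (dπ : ∀ b, TP b →ₗ[ℝ] TB b) (ds : ∀ b, TB b →ₗ[ℝ] TP b)
    -- `π` is a Riemannian submersion
    (hiso : ∀ b, ∀ v ∈ (LinearMap.ker (dπ b))ᗮ, ∀ w ∈ (LinearMap.ker (dπ b))ᗮ,
      inner ℝ (dπ b v) (dπ b w) = (inner ℝ v w : ℝ))
    -- `s` is a section of `π`
    (hsec : ∀ b, dπ b ∘ₗ ds b = LinearMap.id)
    -- the Riemannian jacobian of `ds`
    (J : B → ℝ)
    (hJ : ∀ b, J b = Real.sqrt (LinearMap.det ((LinearMap.adjoint (ds b)) ∘ₗ ds b)))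
    (hJint : Integrable J μ) :
    ∫ b, J b ∂μ ≥ (μ Set.univ).toReal := by
  have hJ_ge_one : ∀ b, 1 ≤ J b := fun b => by
    rw [hJ b, Real.one_le_sqrt]
    exact LinearMap.one_le_det_adjoint_comp_self
      (LinearMap.norm_le_norm_of_comp_eq_id_of_isometric_orthogonal_ker (hiso b) (hsec b))
  calc (μ Set.univ).toReal = ∫ _, (1 : ℝ) ∂μ := by simp [Measure.real]
    _ ≤ ∫ b, J b ∂μ := integral_mono (integrable_const 1) hJint hJ_ge_one

/-- Let `π : P → B` be a Riemannian submersion with `B` compact. Then for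
every `C¹` section `s : B → P`, `vol(s(B)) ≥ vol(B)`.

We encode the data pointwise: `TB b ≅ T_bB` and `TP b ≅ T_{s(b)}P` are the tangent spaces
(finite-dimensional real inner product spaces), `dπ b` is the differential of `π` at `s b`
(surjective and isometric on the orthogonal complement of its kernel: a Riemannian
submersion), `ds b` the differential of the section (`dπ ∘ ds = id`), `μ` the Riemannian
volume measure of `B` (finite, by compactness), and
`J b = √det((ds_b)* ∘ ds_b)` the Riemannian jacobian of `ds`, so that
`vol(s(B)) = ∫_B J dμ ≥ μ(B) = vol(B)`. -/
theorem stmt_9 {n : ℕ} {B : Type*} [MeasurableSpace B]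
    (μ : Measure B) [IsFiniteMeasure μ]
    (TB : B → Type*) [∀ b, NormedAddCommGroup (TB b)] [∀ b, InnerProductSpace ℝ (TB b)]
    [∀ b, FiniteDimensional ℝ (TB b)]
    (TP : B → Type*) [∀ b, NormedAddCommGroup (TP b)] [∀ b, InnerProductSpace ℝ (TP b)]
    [∀ b, FiniteDimensional ℝ (TP b)]
    (hTB : ∀ b, finrank ℝ (TB b) = n)
    (dπ : ∀ b, TP b →ₗ[ℝ] TB b) (ds : ∀ b, TB b →ₗ[ℝ] TP b)
    -- `π` is a Riemannian submersion
    (hsurj : ∀ b, Function.Surjective (dπ b))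
    (hiso : ∀ b, ∀ v ∈ (LinearMap.ker (dπ b))ᗮ, ∀ w ∈ (LinearMap.ker (dπ b))ᗮ,
      inner ℝ (dπ b v) (dπ b w) = (inner ℝ v w : ℝ))
    -- `s` is a section of `π`
    (hsec : ∀ b, dπ b ∘ₗ ds b = LinearMap.id)
    -- the Riemannian jacobian of `ds`
    (J : B → ℝ)
    (hJ : ∀ b, J b = Real.sqrt (LinearMap.det ((LinearMap.adjoint (ds b)) ∘ₗ ds b)))
    (hJint : Integrable J μ) :
    ∫ b, J b ∂μ ≥ (μ Set.univ).toReal :=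
  stmt_9_general μ TB TP dπ ds hiso hsec J hJ hJint
end

section
/- Let f : ℝ^{n+1} → ℝ be a smooth function with compact support, and for t > 0 set A_t = {x : |f(x)| > t}. Then the function u(t) = (∫ |f_t|^{(n+1)/n})^{n/(n+1)}, where f_t is the truncation of f at levels ±t, is Lipschitz and increasing, and ∫₀^∞ vol(A_t)^{n/(n+1)} dt ≥ (∫_{ℝ^{n+1}} |f|^{(n+1)/n} dx)^{n/(n+1)}. -/
open MeasureTheory
open scoped ENNReal NNReal

/-- (Truncation lemma of Federer–Fleming.) Let `f : ℝ^{n+1} → ℝ` be smooth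
with compact support and `A_t = {|f| > t}`. Then
`u(t) = (∫ |f_t|^{(n+1)/n})^{n/(n+1)}` (with `f_t` the truncation of `f` at levels `±t`) is
increasing and Lipschitz on `[0,∞)`, and
`∫₀^∞ vol(A_t)^{n/(n+1)} dt ≥ (∫ |f|^{(n+1)/n})^{n/(n+1)}`. -/
theorem stmt_13 {n : ℕ} (hn : 0 < n)
    (f : EuclideanSpace ℝ (Fin (n + 1)) → ℝ)
    (hf : ContDiff ℝ (⊤ : ℕ∞) f) (hsupp : HasCompactSupport f) :
    MonotoneOn
      (fun t : ℝ =>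
        (∫ x, |max (min (f x) t) (-t)| ^ ((n + 1 : ℝ) / n)) ^ ((n : ℝ) / (n + 1)))
      (Set.Ici 0) ∧
    (∃ K : NNReal, LipschitzOnWith K
      (fun t : ℝ =>
        (∫ x, |max (min (f x) t) (-t)| ^ ((n + 1 : ℝ) / n)) ^ ((n : ℝ) / (n + 1)))
      (Set.Ici 0)) ∧
    (∫ t in Set.Ioi (0 : ℝ), (volume {x | t < |f x|}).toReal ^ ((n : ℝ) / (n + 1))) ≥
      (∫ x, |f x| ^ ((n + 1 : ℝ) / n)) ^ ((n : ℝ) / (n + 1)) := by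
  classical
  have hn' : (0:ℝ) < n := by exact_mod_cast hn
  set p : ℝ := (n + 1 : ℝ) / n with hp_def
  have hp1 : 1 ≤ p := by rw [hp_def, le_div_iff₀ hn']; linarith
  have hp0 : 0 < p := lt_of_lt_of_le one_pos hp1
  have hpinv : (n : ℝ) / (n + 1) = p⁻¹ := by rw [hp_def, inv_div]
  have hpinv0 : 0 < p⁻¹ := inv_pos.2 hp0
  simp only [hpinv]
  set pe : ℝ≥0∞ := ENNReal.ofReal p with hpe_def
  have hpe0 : pe ≠ 0 := by
    simp [hpe_def, ENNReal.ofReal_eq_zero, not_le, hp0]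
  have hpetop : pe ≠ ⊤ := ENNReal.ofReal_ne_top
  have hpe1 : 1 ≤ pe := by
    rw [hpe_def, ← ENNReal.ofReal_one]
    exact ENNReal.ofReal_le_ofReal hp1
  have hpet : pe.toReal = p := ENNReal.toReal_ofReal hp0.le
  set G : ℝ → EuclideanSpace ℝ (Fin (n + 1)) → ℝ := fun t x => min |f x| t with hG_def
  have hGnn : ∀ t, 0 ≤ t → ∀ x, 0 ≤ G t x := fun t ht x => le_min (abs_nonneg _) ht
  have habs : ∀ t : ℝ, 0 ≤ t → ∀ y : ℝ, |max (min y t) (-t)| = min |y| t := by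
    intro t ht y
    rcases le_total 0 y with hy | hy
    · have h1 : -t ≤ min y t := le_trans (neg_nonpos.2 ht) (le_min hy ht)
      rw [max_eq_left h1, abs_of_nonneg (le_min hy ht), abs_of_nonneg hy]
    · rw [min_eq_left (hy.trans ht), abs_of_nonpos (max_le hy (neg_nonpos.2 ht)),
        show -max y (-t) = min (-y) t by rw [← neg_neg t]; rw [min_neg_neg]; ring_nf,
        abs_of_nonpos hy]
  have hGcont : ∀ t, Continuous (G t) := fun t => (hf.continuous.abs).min continuous_const
  have hFc : ∀ t : ℝ, Continuous fun x => G t x ^ p := fun t =>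
    (hGcont t).rpow_const fun x => Or.inr hp0.le
  have hFsupp : ∀ t : ℝ, 0 ≤ t → HasCompactSupport fun x => G t x ^ p := by
    intro t ht
    have h : (fun x => G t x ^ p) = (fun y : ℝ => min |y| t ^ p) ∘ f := rfl
    rw [h]
    exact hsupp.comp_left (by rw [abs_zero, min_eq_left ht, Real.zero_rpow hp0.ne'])
  have hFint : ∀ t : ℝ, 0 ≤ t → Integrable fun x => G t x ^ p :=
    fun t ht => (hFc t).integrable_of_hasCompactSupport (hFsupp t ht)
  have hFnn : ∀ t : ℝ, 0 ≤ t → ∀ x, 0 ≤ G t x ^ p :=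
    fun t ht x => Real.rpow_nonneg (hGnn t ht x) p
  have hInn : ∀ t : ℝ, 0 ≤ t → 0 ≤ ∫ x, G t x ^ p := fun t ht => integral_nonneg (hFnn t ht)
  set u : ℝ → ℝ := fun t => (∫ x, G t x ^ p) ^ p⁻¹ with hu_def
  have hu0 : u 0 = 0 := by
    have h : ∀ x, G 0 x ^ p = 0 := fun x => by
      rw [hG_def]; simp only [min_eq_right (abs_nonneg (f x))]
      exact Real.zero_rpow hp0.ne'
    simp only [hu_def, h, integral_zero]
    exact Real.zero_rpow hpinv0.ne'
  have heq : ∀ t : ℝ, 0 ≤ t →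
      (∫ x, |max (min (f x) t) (-t)| ^ p) ^ p⁻¹ = u t := by
    intro t ht
    have h : (fun x => |max (min (f x) t) (-t)| ^ p) = fun x => G t x ^ p := by
      funext x; rw [habs t ht]
    simp only [hu_def]
    rw [h]
  have hAmeas : ∀ s : ℝ, MeasurableSet {x | s < |f x|} :=
    fun s => (isOpen_lt continuous_const hf.continuous.abs).measurableSet
  have hKfin : volume (tsupport f) ≠ ⊤ := (IsCompact.measure_lt_top hsupp).ne
  have hAsub : ∀ s : ℝ, 0 ≤ s → {x | s < |f x|} ⊆ tsupport f := by
    intro s hs x hx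
    apply subset_tsupport
    intro h0
    rw [Set.mem_setOf_eq, h0, abs_zero] at hx
    exact absurd hx (not_lt.2 hs)
  have hνfin : ∀ s : ℝ, 0 ≤ s → volume {x | s < |f x|} ≠ ⊤ := fun s hs =>
    (lt_of_le_of_lt (measure_mono (hAsub s hs)) (IsCompact.measure_lt_top hsupp)).ne
  set gg : ℝ → ℝ := fun t => (volume {x | t < |f x|}).toReal ^ p⁻¹ with hgg
  have hg_nn : ∀ t, 0 ≤ gg t := fun t => Real.rpow_nonneg ENNReal.toReal_nonneg _
  have he : ∀ t : ℝ, 0 ≤ t →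
      eLpNorm (G t) pe volume = ENNReal.ofReal (∫ x, G t x ^ p) ^ p⁻¹ := by
    intro t ht
    rw [eLpNorm_eq_lintegral_rpow_enorm_toReal hpe0 hpetop, hpet, one_div,
      ofReal_integral_eq_lintegral_ofReal (hFint t ht) (ae_of_all _ (hFnn t ht))]
    congr 1
    apply lintegral_congr
    intro x
    rw [Real.enorm_eq_ofReal (hGnn t ht x),
      ← ENNReal.ofReal_rpow_of_nonneg (hGnn t ht x) hp0.le]
  have hstep : ∀ s t : ℝ, 0 ≤ s → s ≤ t → u t ≤ u s + (t - s) * gg s := by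
    intro s t hs hst
    have ht : 0 ≤ t := hs.trans hst
    set D : EuclideanSpace ℝ (Fin (n + 1)) → ℝ :=
      ({x | s < |f x|}).indicator fun _ => t - s with hD_def
    have hpt : ∀ x, |G t x - G s x| ≤ D x := by
      intro x
      by_cases hx : x ∈ {x | s < |f x|}
      · rw [hD_def, Set.indicator_of_mem hx, abs_le]
        have hGts : G s x ≤ G t x := min_le_min le_rfl hst
        have h1 : G t x ≤ t := min_le_right _ _
        have h2 : G s x = s := min_eq_right (le_of_lt hx)
        constructor <;> [linarith; linarith]
      · rw [hD_def, Set.indicator_of_notMem hx]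
        have hfx : |f x| ≤ s := not_lt.1 hx
        rw [hG_def]
        simp only [min_eq_left (hfx.trans hst), min_eq_left hfx, sub_self, abs_zero]
        exact le_refl 0
    have h1 : eLpNorm (G t) pe volume ≤
        eLpNorm (G s) pe volume + eLpNorm (fun x => G t x - G s x) pe volume := by
      have hGeq : (G s + fun x => G t x - G s x) = G t := by funext x; simp
      have := eLpNorm_add_le (μ := volume) (p := pe) ((hGcont s).aestronglyMeasurable)
        (((hGcont t).sub (hGcont s)).aestronglyMeasurable) hpe1
      rw [add_sub_cancel] at this; exact this
    have h2 : eLpNorm (fun x => G t x - G s x) pe volume ≤ eLpNorm D pe volume :=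
      eLpNorm_mono_real fun x => by rw [Real.norm_eq_abs]; exact hpt x
    have h3 : eLpNorm D pe volume =
        ENNReal.ofReal (t - s) * volume {x | s < |f x|} ^ p⁻¹ := by
      rw [hD_def, eLpNorm_indicator_const (hAmeas s) hpe0 hpetop, hpet, one_div,
        Real.enorm_eq_ofReal (sub_nonneg.2 hst)]
    have hAfin : volume {x | s < |f x|} ^ p⁻¹ ≠ ⊤ :=
      (ENNReal.rpow_lt_top_of_nonneg hpinv0.le (hνfin s hs)).ne
    have hcomb : ENNReal.ofReal (∫ x, G t x ^ p) ^ p⁻¹ ≤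
        ENNReal.ofReal (∫ x, G s x ^ p) ^ p⁻¹ +
          ENNReal.ofReal (t - s) * volume {x | s < |f x|} ^ p⁻¹ := by
      rw [← he t ht, ← he s hs, ← h3]
      exact h1.trans (add_le_add le_rfl h2)
    have fin1 : ENNReal.ofReal (∫ x, G s x ^ p) ^ p⁻¹ ≠ ⊤ :=
      (ENNReal.rpow_lt_top_of_nonneg hpinv0.le ENNReal.ofReal_ne_top).ne
    have fin2 : ENNReal.ofReal (t - s) * volume {x | s < |f x|} ^ p⁻¹ ≠ ⊤ :=
      ENNReal.mul_ne_top ENNReal.ofReal_ne_top hAfin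
    have hmono := ENNReal.toReal_mono (ENNReal.add_ne_top.2 ⟨fin1, fin2⟩) hcomb
    rw [ENNReal.toReal_add fin1 fin2, ← ENNReal.toReal_rpow, ← ENNReal.toReal_rpow,
      ENNReal.toReal_ofReal (hInn t ht), ENNReal.toReal_ofReal (hInn s hs),
      ENNReal.toReal_mul, ENNReal.toReal_ofReal (sub_nonneg.2 hst),
      ← ENNReal.toReal_rpow] at hmono
    simp only [hu_def, hgg]
    exact hmono
  have humono : ∀ a b : ℝ, 0 ≤ a → a ≤ b → u a ≤ u b := by
    intro a b ha hab
    have hb := ha.trans hab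
    simp only [hu_def]
    apply Real.rpow_le_rpow (hInn a ha) _ hpinv0.le
    exact integral_mono (hFint a ha) (hFint b hb) fun x =>
      Real.rpow_le_rpow (hGnn a ha x) (min_le_min le_rfl hab) hp0.le
  set K₀ : ℝ := (volume (tsupport f)).toReal ^ p⁻¹ with hK₀
  have hK₀nn : 0 ≤ K₀ := Real.rpow_nonneg ENNReal.toReal_nonneg _
  have hggK : ∀ a : ℝ, 0 ≤ a → gg a ≤ K₀ := by
    intro a ha
    simp only [hgg, hK₀]
    exact Real.rpow_le_rpow ENNReal.toReal_nonneg
      (ENNReal.toReal_mono hKfin (measure_mono (hAsub a ha))) hpinv0.le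
  have hbound : ∀ a b : ℝ, 0 ≤ a → a ≤ b → u b - u a ≤ K₀ * (b - a) := by
    intro a b ha hab
    have h := hstep a b ha hab
    have h2 : (b - a) * gg a ≤ (b - a) * K₀ :=
      mul_le_mul_of_nonneg_left (hggK a ha) (sub_nonneg.2 hab)
    linarith [mul_comm (b - a) K₀]
  refine ⟨?_, ⟨K₀.toNNReal, ?_⟩, ?_⟩
  · intro a ha b hb hab
    beta_reduce
    rw [heq a ha, heq b hb]
    exact humono a b ha hab
  · apply LipschitzOnWith.of_dist_le'
    intro x hx y hy
    beta_reduce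
    rw [heq x hx, heq y hy]
    rcases le_total x y with hxy | hxy
    · rw [Real.dist_eq, Real.dist_eq, abs_sub_comm, abs_of_nonneg (sub_nonneg.2 (humono x y hx hxy)),
        abs_sub_comm, abs_of_nonneg (sub_nonneg.2 hxy)]
      exact hbound x y hx hxy
    · rw [Real.dist_eq, Real.dist_eq, abs_of_nonneg (sub_nonneg.2 (humono y x hy hxy)),
        abs_of_nonneg (sub_nonneg.2 hxy)]
      exact hbound y x hy hxy
  · obtain ⟨C, hC⟩ := hf.continuous.bounded_above_of_compact_support hsupp
    set T : ℝ := max C 1 with hT_def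
    have hT0 : 0 < T := lt_of_lt_of_le one_pos (le_max_right _ _)
    have hCT : ∀ x, |f x| ≤ T := fun x => by
      rw [← Real.norm_eq_abs]; exact (hC x).trans (le_max_left _ _)
    have hRHS : (∫ x, |f x| ^ p) ^ p⁻¹ = u T := by
      have h : (fun x => G T x ^ p) = fun x => |f x| ^ p := by
        funext x; rw [hG_def]; simp only [min_eq_left (hCT x)]
      simp only [hu_def]
      rw [h]
    have hganti : ∀ a b : ℝ, 0 ≤ a → a ≤ b → gg b ≤ gg a := by
      intro a b ha hab
      simp only [hgg]
      exact Real.rpow_le_rpow ENNReal.toReal_nonneg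
        (ENNReal.toReal_mono (hνfin a ha)
          (measure_mono fun x hx => lt_of_le_of_lt hab hx)) hpinv0.le
    have hgT : ∀ t : ℝ, T ≤ t → gg t = 0 := by
      intro t htT
      have hempty : {x | t < |f x|} = ∅ := by
        ext x
        simp only [Set.mem_setOf_eq, Set.mem_empty_iff_false, iff_false, not_lt]
        exact (hCT x).trans htT
      simp only [hgg, hempty, measure_empty, ENNReal.toReal_zero]
      exact Real.zero_rpow hpinv0.ne'
    have hgint : ∀ b : ℝ, 0 ≤ b → IntegrableOn gg (Set.Ioc 0 b) := by
      intro b hb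
      have h1 : AntitoneOn gg (Set.Icc 0 b) := fun x hx y hy hxy => hganti x y hx.1 hxy
      exact (AntitoneOn.integrableOn_isCompact isCompact_Icc h1).mono_set Set.Ioc_subset_Icc_self
    have hgintIoi : IntegrableOn gg (Set.Ioi 0) := by
      have h2 : IntegrableOn gg (Set.Ioi T) := by
        exact (integrableOn_congr_fun (g := fun _ => (0:ℝ))
          (fun t ht => hgT t (le_of_lt ht)) measurableSet_Ioi).mpr integrableOn_zero
      have h3 := (hgint T hT0.le).union h2
      rwa [Set.Ioc_union_Ioi_eq_Ioi hT0.le] at h3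
    have hblock : ∀ a b : ℝ, 0 ≤ a → a ≤ b → (b - a) * gg b ≤ ∫ t in Set.Ioc a b, gg t := by
      intro a b ha hab
      have hint : IntegrableOn gg (Set.Ioc a b) :=
        (hgint b (ha.trans hab)).mono_set (Set.Ioc_subset_Ioc_left ha)
      have h1 : ∫ _ in Set.Ioc a b, gg b ≤ ∫ t in Set.Ioc a b, gg t :=
        setIntegral_mono_on (integrableOn_const measure_Ioc_lt_top.ne) hint
          measurableSet_Ioc fun t ht => hganti t b (ha.trans ht.1.le) ht.2
      calc (b - a) * gg b = ∫ _ in Set.Ioc a b, gg b := by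
            rw [setIntegral_const, Real.volume_real_Ioc_of_le hab,
              smul_eq_mul]
        _ ≤ _ := h1
    have hchain : ∀ a b : ℝ, 0 ≤ a → a ≤ b →
        (∫ t in Set.Ioc 0 a, gg t) + ∫ t in Set.Ioc a b, gg t = ∫ t in Set.Ioc 0 b, gg t := by
      intro a b ha hab
      rw [← setIntegral_union (Set.Ioc_disjoint_Ioc_of_le le_rfl) measurableSet_Ioc (hgint a ha)
        ((hgint b (ha.trans hab)).mono_set (Set.Ioc_subset_Ioc_left ha)),
        Set.Ioc_union_Ioc_eq_Ioc ha hab]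
    have hmain : ∀ h : ℝ, 0 < h → ∀ N : ℕ,
        u ((N + 1) * h) ≤ h * gg 0 + ∫ t in Set.Ioc 0 (N * h), gg t := by
      intro h hh N
      induction N with
      | zero =>
        simp only [Nat.cast_zero, zero_add, one_mul, zero_mul, Set.Ioc_self,
          Measure.restrict_empty, integral_zero_measure]
        have hs := hstep 0 h le_rfl hh.le
        rw [hu0] at hs
        linarith
      | succ N ih =>
        have hN0 : (0:ℝ) ≤ N * h := by positivity
        push_cast
        push_cast at ih
        set s : ℝ := ((N : ℝ) + 1) * h with hs_def
        have hgoal : ((N : ℝ) + 1 + 1) * h = s + h := by rw [hs_def]; ring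
        rw [hgoal]
        have hs0 : 0 ≤ s := by rw [hs_def]; positivity
        have hstep1 := hstep s (s + h) hs0 (by linarith)
        rw [add_sub_cancel_left] at hstep1
        have hb := hblock (N * h) s hN0 (by rw [hs_def]; nlinarith)
        have hdiff : s - (N : ℝ) * h = h := by rw [hs_def]; ring
        rw [hdiff] at hb
        have hc := hchain ((N : ℝ) * h) s hN0 (by rw [hs_def]; nlinarith)
        linarith
    have hfinal : ∀ N : ℕ, u T ≤ T / (N + 1) * gg 0 + ∫ t in Set.Ioi 0, gg t := by
      intro N
      have hNpos : (0:ℝ) < (N : ℝ) + 1 := by positivity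
      have hh : 0 < T / ((N : ℝ) + 1) := by positivity
      have h1 := hmain (T / ((N : ℝ) + 1)) hh N
      have hTeq : ((N : ℝ) + 1) * (T / ((N : ℝ) + 1)) = T := by field_simp
      rw [hTeq] at h1
      have h2 : ∫ t in Set.Ioc 0 ((N : ℝ) * (T / ((N : ℝ) + 1))), gg t ≤
          ∫ t in Set.Ioi 0, gg t :=
        setIntegral_mono_set hgintIoi (ae_of_all _ fun t => hg_nn t)
          (HasSubset.Subset.eventuallyLE Set.Ioc_subset_Ioi_self)
      linarith
    have htend : Filter.Tendsto (fun N : ℕ => T / ((N : ℝ) + 1) * gg 0 + ∫ t in Set.Ioi 0, gg t)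
        Filter.atTop (nhds (0 * gg 0 + ∫ t in Set.Ioi 0, gg t)) := by
      have h0 : Filter.Tendsto (fun N : ℕ => T / ((N : ℝ) + 1)) Filter.atTop (nhds 0) := by
        have := (tendsto_const_div_atTop_nhds_zero_nat T).comp (Filter.tendsto_add_atTop_nat 1)
        simpa [Function.comp_def, Nat.cast_add, Nat.cast_one] using this
      exact (h0.mul_const _).add_const _
    have hle : u T ≤ ∫ t in Set.Ioi 0, gg t := by
      have := ge_of_tendsto' htend hfinal
      simpa using this
    rw [ge_iff_le, hRHS]
    exact hle
end
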